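/- For real parameters a₀, a₁, a₂, a₃, a₄, a₅, a₆, the function u(x,y,t) = a₁ x² + a₂ y² + 4 a₁ a₂ t + a₀ exp[a₃ x + (2 a₂ a₃² − a₃⁴) t] + a₄ x + a₅ y + a₆ satisfies the equation uₜ = det(D²u) − Δ²u on ℝ² × ℝ. -/

import Mathlib

/-!
Every one-variable slice of `u` has the form `A s² + B e^{k s + c} + C s + D`, a family closed
under `d/ds`. In `y` the slice is a pure quadratic, so `u_xy` vanishes and `u_yy = 2 a₂`; the
equation then reduces to `4 a₁ a₂ = 2 a₁ · 2 a₂` for the polynomial part and to the dispersion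
relation `λ = 2 a₂ a₃² − a₃⁴` for the exponential `e^{a₃ x + λ t}`.
-/

noncomputable section

/-- The explicit exponential-type solution on the plane. -/
def U (a₀ a₁ a₂ a₃ a₄ a₅ a₆ x y t : ℝ) : ℝ :=
  a₁ * x ^ 2 + a₂ * y ^ 2 + 4 * a₁ * a₂ * t +
    a₀ * Real.exp (a₃ * x + (2 * a₂ * a₃ ^ 2 - a₃ ^ 4) * t) +
    a₄ * x + a₅ * y + a₆

def quadExp (A B C D k c : ℝ) (s : ℝ) : ℝ :=
  A * s ^ 2 + B * Real.exp (k * s + c) + C * s + D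

theorem hasDerivAt_quadExp (A B C D k c s : ℝ) :
    HasDerivAt (quadExp A B C D k c) (quadExp 0 (B * k) (2 * A) C k c s) s := by
  have hlin : HasDerivAt (fun s : ℝ => k * s + c) k s := by
    simpa using ((hasDerivAt_id s).const_mul k).add_const c
  refine ((((hasDerivAt_pow 2 s).const_mul A).add (hlin.exp.const_mul B)).add
    ((hasDerivAt_id' s).const_mul C)).add_const D |>.congr_deriv ?_
  simp only [quadExp]
  ring

theorem deriv_quadExp (A B C D k c : ℝ) :
    deriv (quadExp A B C D k c) = quadExp 0 (B * k) (2 * A) C k c :=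
  funext fun s => (hasDerivAt_quadExp A B C D k c s).deriv

theorem iteratedDeriv_two_quadExp (A B C D k c : ℝ) :
    iteratedDeriv 2 (quadExp A B C D k c) = quadExp 0 (B * k ^ 2) 0 (2 * A) k c := by
  simp only [iteratedDeriv_succ, iteratedDeriv_zero, deriv_quadExp]
  congr 1 <;> ring

theorem iteratedDeriv_four_quadExp (A B C D k c : ℝ) :
    iteratedDeriv 4 (quadExp A B C D k c) = quadExp 0 (B * k ^ 4) 0 0 k c := by
  simp only [iteratedDeriv_succ, iteratedDeriv_zero, deriv_quadExp]
  congr 1 <;> ring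

section Slices

variable (a₀ a₁ a₂ a₃ a₄ a₅ a₆ x y t : ℝ)

theorem U_x_slice : (fun x' => U a₀ a₁ a₂ a₃ a₄ a₅ a₆ x' y t) =
    quadExp a₁ a₀ a₄ (a₂ * y ^ 2 + 4 * a₁ * a₂ * t + a₅ * y + a₆) a₃
      ((2 * a₂ * a₃ ^ 2 - a₃ ^ 4) * t) := by
  funext x'
  simp only [U, quadExp]
  ring

theorem U_y_slice : (fun y' => U a₀ a₁ a₂ a₃ a₄ a₅ a₆ x y' t) =
    quadExp a₂ 0 a₅ (a₁ * x ^ 2 + 4 * a₁ * a₂ * t +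
      a₀ * Real.exp (a₃ * x + (2 * a₂ * a₃ ^ 2 - a₃ ^ 4) * t) + a₄ * x + a₆) 0 0 := by
  funext y'
  simp only [U, quadExp]
  ring

theorem U_t_slice : (fun t' => U a₀ a₁ a₂ a₃ a₄ a₅ a₆ x y t') =
    quadExp 0 a₀ (4 * a₁ * a₂) (a₁ * x ^ 2 + a₂ * y ^ 2 + a₄ * x + a₅ * y + a₆)
      (2 * a₂ * a₃ ^ 2 - a₃ ^ 4) (a₃ * x) := by
  funext t'
  simp only [U, quadExp]
  ring_nf

end Slices

/-- The exponential-type solution satisfies `uₜ = det(D²u) − Δ²u` on `ℝ² × ℝ`. -/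
theorem stmt11 (a₀ a₁ a₂ a₃ a₄ a₅ a₆ x y t : ℝ) :
    deriv (fun s => U a₀ a₁ a₂ a₃ a₄ a₅ a₆ x y s) t =
      (iteratedDeriv 2 (fun x' => U a₀ a₁ a₂ a₃ a₄ a₅ a₆ x' y t) x *
        iteratedDeriv 2 (fun y' => U a₀ a₁ a₂ a₃ a₄ a₅ a₆ x y' t) y -
        (deriv (fun x' => deriv (fun y' => U a₀ a₁ a₂ a₃ a₄ a₅ a₆ x' y' t) y) x) ^ 2) -
      (iteratedDeriv 4 (fun x' => U a₀ a₁ a₂ a₃ a₄ a₅ a₆ x' y t) x +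
        2 * iteratedDeriv 2
          (fun x' => iteratedDeriv 2 (fun y' => U a₀ a₁ a₂ a₃ a₄ a₅ a₆ x' y' t) y) x +
        iteratedDeriv 4 (fun y' => U a₀ a₁ a₂ a₃ a₄ a₅ a₆ x y' t) y) := by
  have u_xy : (fun x' => deriv (fun y' => U a₀ a₁ a₂ a₃ a₄ a₅ a₆ x' y' t) y) =
      fun _ => 2 * a₂ * y + a₅ := by
    funext x'
    rw [U_y_slice, deriv_quadExp]
    simp [quadExp]
  have u_yy : (fun x' => iteratedDeriv 2 (fun y' => U a₀ a₁ a₂ a₃ a₄ a₅ a₆ x' y' t) y) =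
      fun _ => 2 * a₂ := by
    funext x'
    rw [U_y_slice, iteratedDeriv_two_quadExp]
    simp [quadExp]
  rw [U_t_slice, U_x_slice, U_y_slice, u_xy, u_yy, deriv_quadExp, deriv_const,
    iteratedDeriv_two_quadExp, iteratedDeriv_two_quadExp, iteratedDeriv_four_quadExp,
    iteratedDeriv_four_quadExp, iteratedDeriv_const, if_neg two_ne_zero]
  simp only [quadExp]
  ring_nf
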